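/- arXiv:2207.02664 — 2 statements merged into one kernel-verified Lean document; each statement's English description precedes it below -/
import Mathlib

section
/- Let A = [[B, a],[aᵀ, b]] be an n×n partitioned real symmetric matrix with B of size (n−1)×(n−1), a ∈ ℝ^{n−1}, and b ∈ ℝ. If there exists u ∈ ℝ^{n−1} with Bu = 0 and aᵀu ≠ 0, then the positive index of inertia satisfies p_A = p_B + 1. -/
attribute [local instance] Classical.propDecidable

open Finset Matrix

/-! ## Signed hypergraphs (edges indexed by a type `E`; `sign v e ∈ {0, 1, -1}`,
nonzero exactly on incidences) -/

structure SignedHypergraph (V E : Type) where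
  sign : V → E → ℝ
  sign_values : ∀ v e, sign v e = 0 ∨ sign v e = 1 ∨ sign v e = -1

namespace SignedHypergraph

variable {V E : Type} [Fintype V] [Fintype E] [DecidableEq V] [DecidableEq E]

/-- The vertex set of an edge. -/
noncomputable def edgeVerts (G : SignedHypergraph V E) (e : E) : Finset V :=
  Finset.univ.filter fun v => G.sign v e ≠ 0

/-- The degree of a vertex. -/
noncomputable def deg (G : SignedHypergraph V E) (v : V) : ℕ :=
  (Finset.univ.filter fun e : E => G.sign v e ≠ 0).card

/-- The sign of an edge: `sgn e = (-1)^(|e|-1) ∏_{v ∈ e} σ(v,e)`. -/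
noncomputable def edgeSign (G : SignedHypergraph V E) (e : E) : ℝ :=
  (-1 : ℝ) ^ ((G.edgeVerts e).card - 1) * ∏ v ∈ G.edgeVerts e, G.sign v e

/-- The signed adjacency matrix. -/
noncomputable def adj (G : SignedHypergraph V E) : Matrix V V ℝ :=
  Matrix.of fun x y =>
    if x = y then 0
    else ∑ e ∈ Finset.univ.filter (fun e : E => G.sign x e ≠ 0 ∧ G.sign y e ≠ 0), G.edgeSign e

/-- The normalized Laplacian `L = I - D⁻¹ A`. -/
noncomputable def lap (G : SignedHypergraph V E) : Matrix V V ℝ :=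
  Matrix.of fun x y => (if x = y then (1 : ℝ) else 0) - G.adj x y / (G.deg x : ℝ)

/-- The degree-weighted inner product `⟨f, g⟩ = ∑ v deg(v) f(v) g(v)`. -/
noncomputable def dInner (G : SignedHypergraph V E) (f g : V → ℝ) : ℝ :=
  ∑ v : V, (G.deg v : ℝ) * f v * g v

/-- Two vertices share an edge. -/
def Adjacent (G : SignedHypergraph V E) (x y : V) : Prop :=
  ∃ e : E, G.sign x e ≠ 0 ∧ G.sign y e ≠ 0

/-- The underlying hypergraph is connected. -/
def Connected (G : SignedHypergraph V E) : Prop :=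
  ∀ x y : V, Relation.ReflTransGen G.Adjacent x y

/-- One step of a strong nodal domain path: `x, y` in a common edge `e` with
`f x · sgn e · f y > 0`. -/
def sStep (G : SignedHypergraph V E) (f : V → ℝ) (x y : V) : Prop :=
  ∃ e : E, G.sign x e ≠ 0 ∧ G.sign y e ≠ 0 ∧ 0 < f x * G.edgeSign e * f y

/-- The number `𝔖(f)` of strong nodal domains: equivalence classes of the support of `f`
under joining by S-paths. -/
noncomputable def strongDomainCount (G : SignedHypergraph V E) (f : V → ℝ) : ℕ :=
  Set.ncard {D : Set V | ∃ w, f w ≠ 0 ∧ D = {x | Relation.ReflTransGen (G.sStep f) w x}}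

/-- A weak nodal domain path: a walk along edges such that any two consecutive nonzeros
`v i`, `v j` of `f` (joined through zeros by the edges `e i, …, e (j-1)`) satisfy
`f (v i) · sgn (e i) ⋯ sgn (e (j-1)) · f (v j) > 0`. -/
def IsWPath (G : SignedHypergraph V E) (f : V → ℝ) {ℓ : ℕ}
    (v : Fin (ℓ + 1) → V) (e : Fin ℓ → E) : Prop :=
  (∀ t : Fin ℓ, G.sign (v t.castSucc) (e t) ≠ 0 ∧ G.sign (v t.succ) (e t) ≠ 0) ∧
  ∀ i j : Fin (ℓ + 1), i < j → f (v i) ≠ 0 → f (v j) ≠ 0 →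
    (∀ k : Fin (ℓ + 1), i < k → k < j → f (v k) = 0) →
    0 < f (v i) *
        (∏ t : Fin ℓ, if (i : ℕ) ≤ (t : ℕ) ∧ (t : ℕ) < (j : ℕ) then G.edgeSign (e t) else 1) *
        f (v j)

/-- `x` and `y` are joined by a W-path (or equal). -/
def wRel (G : SignedHypergraph V E) (f : V → ℝ) (x y : V) : Prop :=
  x = y ∨ ∃ (ℓ : ℕ) (v : Fin (ℓ + 1) → V) (e : Fin ℓ → E),
    G.IsWPath f v e ∧ v 0 = x ∧ v (Fin.last ℓ) = y

/-- The weak nodal domain of a vertex `w` in the support of `f`: the equivalence class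
of `w` under the W-path relation on the support, enlarged by the zero vertices
W-path-connected to it. -/
def weakDomain (G : SignedHypergraph V E) (f : V → ℝ) (w : V) : Set V :=
  {x | ∃ y, f y ≠ 0 ∧ G.wRel f w y ∧ G.wRel f x y}

def IsWeakNodalDomain (G : SignedHypergraph V E) (f : V → ℝ) (D : Set V) : Prop :=
  ∃ w, f w ≠ 0 ∧ D = G.weakDomain f w

/-- The number `𝔚(f)` of weak nodal domains. -/
noncomputable def weakDomainCount (G : SignedHypergraph V E) (f : V → ℝ) : ℕ :=
  Set.ncard {D : Set V | G.IsWeakNodalDomain f D}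

/-- The number of connected components of the subhypergraph induced on the vertex set `A`
with edges restricted to those satisfying `P`. -/
noncomputable def componentsOn (G : SignedHypergraph V E) (A : Finset V) (P : E → Prop) : ℕ :=
  Set.ncard {C : Set V | ∃ v ∈ A, C =
    {u | u ∈ A ∧ Relation.ReflTransGen
      (fun x y => x ∈ A ∧ y ∈ A ∧ ∃ e, P e ∧ G.sign x e ≠ 0 ∧ G.sign y e ≠ 0) v u}}

/-- The cyclomatic number `l = ∑_e (|e|-1) - |V| + c` of the subhypergraph induced on `A`
with edges restricted to those satisfying `P`. -/
noncomputable def cyclomaticOn (G : SignedHypergraph V E) (A : Finset V) (P : E → Prop) : ℤ :=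
  (∑ e ∈ Finset.univ.filter (fun e : E => P e ∧ (G.edgeVerts e ∩ A).Nonempty),
      (((G.edgeVerts e ∩ A).card : ℤ) - 1)) -
    (A.card : ℤ) + (G.componentsOn A P : ℤ)

/-- An edge all of whose pairs of (distinct) vertices `x, y` satisfy
`f x · sgn e · f y > 0`. -/
def posEdge (G : SignedHypergraph V E) (f : V → ℝ) (e : E) : Prop :=
  ∀ x y : V, G.sign x e ≠ 0 → G.sign y e ≠ 0 → x ≠ y → 0 < f x * G.edgeSign e * f y

/-- An edge of the subhypergraph `S` on the support of `f`. -/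
def sEdge (G : SignedHypergraph V E) (f : V → ℝ) (e : E) : Prop :=
  (∀ v, G.sign v e ≠ 0 → f v ≠ 0) ∧ G.posEdge f e

/-- The subhypergraph with edge set `P` contains a cycle. -/
def HasCycle (G : SignedHypergraph V E) (P : E → Prop) : Prop :=
  ∃ (q : ℕ) (v : Fin (q + 1) → V) (e : Fin q → E), 2 ≤ q ∧
    Function.Injective (fun t : Fin q => v t.castSucc) ∧ Function.Injective e ∧
    v (Fin.last q) = v 0 ∧
    ∀ t : Fin q, P (e t) ∧ G.sign (v t.castSucc) (e t) ≠ 0 ∧ G.sign (v t.succ) (e t) ≠ 0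

/-- A tree-like vertex: its removal increases the number of connected components
by `deg x - 1`. -/
def Treelike (G : SignedHypergraph V E) (x : V) : Prop :=
  (G.componentsOn (Finset.univ.erase x) (fun _ => True) : ℤ) =
    (G.componentsOn Finset.univ (fun _ => True) : ℤ) + (G.deg x : ℤ) - 1

/-- The Fiedler zero set of `f`: zeros `x` of `f` such that either all vertices sharing an
edge with `x` are zeros, or `x` is not tree-like. -/
def fiedlerSet (G : SignedHypergraph V E) (f : V → ℝ) : Set V :=
  {x | f x = 0 ∧ ((∀ y, G.Adjacent x y → f y = 0) ∨ ¬ G.Treelike x)}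

/-- Weak deletion of the vertices in `R`: each vertex of `R` is removed from every hyperedge
(possibly creating empty edges). -/
def weakDelete (G : SignedHypergraph V E) (R : Finset V) :
    SignedHypergraph {v : V // v ∉ R} E :=
  ⟨fun v e => G.sign v.1 e, fun v e => G.sign_values v.1 e⟩

end SignedHypergraph

/-! ## Plain hypergraphs -/

structure PlainHypergraph (V : Type) where
  verts : Finset V
  edges : Finset (Finset V)
  edge_subset : ∀ e ∈ edges, e ⊆ verts

namespace PlainHypergraph

variable {V : Type} [DecidableEq V]

def Adjacent (H : PlainHypergraph V) (x y : V) : Prop := ∃ e ∈ H.edges, x ∈ e ∧ y ∈ e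

def Connected (H : PlainHypergraph V) : Prop :=
  ∀ x ∈ H.verts, ∀ y ∈ H.verts, Relation.ReflTransGen H.Adjacent x y

/-- A cycle: an alternating closed sequence of distinct vertices and distinct edges
`v 0, e 0, v 1, e 1, …, v q = v 0` of length `q ≥ 2` with `v t, v (t+1) ∈ e t`. -/
def IsCycle (H : PlainHypergraph V) {q : ℕ} (v : Fin (q + 1) → V) (e : Fin q → Finset V) : Prop :=
  2 ≤ q ∧ Function.Injective (fun t : Fin q => v t.castSucc) ∧ Function.Injective e ∧
    v (Fin.last q) = v 0 ∧
    ∀ t : Fin q, e t ∈ H.edges ∧ v t.castSucc ∈ e t ∧ v t.succ ∈ e t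

def Acyclic (H : PlainHypergraph V) : Prop :=
  ¬ ∃ (q : ℕ) (v : Fin (q + 1) → V) (e : Fin q → Finset V), H.IsCycle v e

/-- The number of connected components. -/
noncomputable def ncomp (H : PlainHypergraph V) : ℕ :=
  Set.ncard {C : Set V | ∃ v ∈ H.verts, C = {u | Relation.ReflTransGen H.Adjacent v u}}

/-- The cyclomatic number `l(H) = ∑_e (|e|-1) - |V| + c(H)`. -/
noncomputable def cyclomatic (H : PlainHypergraph V) : ℤ :=
  (∑ e ∈ H.edges, ((e.card : ℤ) - 1)) - (H.verts.card : ℤ) + (H.ncomp : ℤ)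

def degree (H : PlainHypergraph V) (x : V) : ℕ := (H.edges.filter fun e => x ∈ e).card

/-- The subhypergraph induced by a vertex set `A`: edges `e ∩ A` for `e ∩ A ≠ ∅`. -/
def induced (H : PlainHypergraph V) (A : Finset V) : PlainHypergraph V where
  verts := H.verts ∩ A
  edges := (H.edges.filter fun e => (e ∩ A).Nonempty).image fun e => e ∩ A
  edge_subset := by
    intro e' he'
    simp only [Finset.mem_image, Finset.mem_filter] at he'
    obtain ⟨e, ⟨heE, -⟩, rfl⟩ := he'
    intro x hx
    rcases Finset.mem_inter.mp hx with ⟨hxe, hxA⟩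
    exact Finset.mem_inter.mpr ⟨H.edge_subset e heE hxe, hxA⟩

/-- A tree-like vertex: deleting it (induced subhypergraph on the remaining vertices)
increases the number of connected components by `deg x - 1`. -/
def Treelike (H : PlainHypergraph V) (x : V) : Prop :=
  ((H.induced (H.verts.erase x)).ncomp : ℤ) = (H.ncomp : ℤ) + (H.degree x : ℤ) - 1

/-- Removal of a vertex together with all edges incident to it. -/
def deleteVert (H : PlainHypergraph V) (y : V) : PlainHypergraph V where
  verts := H.verts.erase y
  edges := H.edges.filter fun e => y ∉ e
  edge_subset := by
    intro e he
    rcases Finset.mem_filter.mp he with ⟨heE, hy⟩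
    intro x hx
    exact Finset.mem_erase.mpr ⟨fun h => hy (h ▸ hx), H.edge_subset e heE hx⟩

/-- A spanning hyperforest of `H`: a maximal acyclic spanning subhypergraph. -/
def IsSpanningHyperforest (H T : PlainHypergraph V) : Prop :=
  T.verts = H.verts ∧ T.edges ⊆ H.edges ∧ T.Acyclic ∧
    ∀ T' : PlainHypergraph V, T'.verts = H.verts → T'.edges ⊆ H.edges → T'.Acyclic →
      T.edges ⊆ T'.edges → T'.edges = T.edges

end PlainHypergraph

/-- The positive index of inertia of a real matrix: the number of positive roots of its
characteristic polynomial, counted with multiplicity. -/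
noncomputable def posInertia {m : Type} [Fintype m] [DecidableEq m] (M : Matrix m m ℝ) : ℕ :=
  (M.charpoly.roots.filter fun x => 0 < x).card

/-- The bordered matrix `[[B, a], [aᵀ, b]]`. -/
def borderMatrix {n : ℕ} (B : Matrix (Fin n) (Fin n) ℝ) (a : Fin n → ℝ) (b : ℝ) :
    Matrix (Fin n ⊕ Unit) (Fin n ⊕ Unit) ℝ :=
  Matrix.fromBlocks B (Matrix.of fun i _ => a i) (Matrix.of fun _ j => a j)
    (Matrix.of fun _ _ => b)

/-! The positive index of inertia `p_M` of a symmetric `M` is the largest dimension of a subspace on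
which `x ↦ xᵀ M x` is positive definite. Hence `p` can only drop under a congruence `M ↦ Pᵀ M P`,
and drops by at most the codimension when passing to a principal submatrix; the latter gives
`p_A ≤ p_B + 1`. Conversely, since `B u = 0` and `aᵀ u ≠ 0`, an explicit congruence turns `A` into
the block-diagonal `diag(B, 1)`, whence `p_B + 1 ≤ p_A`. -/

namespace Matrix

def PosDefOn {m : Type} [Fintype m] (M : Matrix m m ℝ) (W : Submodule ℝ (m → ℝ)) : Prop :=
  ∀ x ∈ W, x ≠ 0 → 0 < x ⬝ᵥ (M *ᵥ x)

namespace IsHermitian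

variable {m : Type} [Fintype m] [DecidableEq m] {M : Matrix m m ℝ}

lemma posInertia_eq_card_pos_eigenvalues (hM : M.IsHermitian) :
    posInertia M = Fintype.card {i // 0 < hM.eigenvalues i} := by
  rw [posInertia, hM.roots_charpoly_eq_eigenvalues, Multiset.filter_map, Multiset.card_map,
    Fintype.card_subtype, Finset.card_def, Finset.filter_val]
  rfl

lemma dotProduct_mulVec_eq_sum_eigenvalues (hM : M.IsHermitian) (x : m → ℝ) :
    x ⬝ᵥ (M *ᵥ x) =
      ∑ i, hM.eigenvalues i * ((hM.eigenvectorUnitary : Matrix m m ℝ)ᵀ *ᵥ x) i ^ 2 := by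
  set U : Matrix m m ℝ := ↑hM.eigenvectorUnitary
  have hM' : M = U * diagonal hM.eigenvalues * Uᵀ := by
    conv_lhs => rw [hM.spectral_theorem, Unitary.conjStarAlgAut_apply]
    simp [U, star_eq_conjTranspose]
  calc x ⬝ᵥ (M *ᵥ x) = x ⬝ᵥ ((U * diagonal hM.eigenvalues * Uᵀ) *ᵥ x) := by rw [← hM']
    _ = _ := by
      rw [← mulVec_mulVec, ← mulVec_mulVec, dotProduct_mulVec, mulVec_transpose]
      simp only [dotProduct, mulVec_diagonal]
      exact Finset.sum_congr rfl fun i _ => by ring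

lemma finrank_le_posInertia (hM : M.IsHermitian) {W : Submodule ℝ (m → ℝ)}
    (hW : M.PosDefOn W) : Module.finrank ℝ W ≤ posInertia M := by
  set U : Matrix m m ℝ := ↑hM.eigenvectorUnitary
  -- `W` meets the span of the eigenvectors with eigenvalue `≤ 0` only in `0`.
  let f : W →ₗ[ℝ] ({i // 0 < hM.eigenvalues i} → ℝ) :=
    LinearMap.funLeft ℝ ℝ Subtype.val ∘ₗ Uᵀ.mulVecLin ∘ₗ W.subtype
  have hf : Function.Injective f := by
    rw [← LinearMap.ker_eq_bot, LinearMap.ker_eq_bot']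
    intro x hx
    by_contra hx0
    have hpos := hW x x.2 (by simpa using hx0)
    rw [hM.dotProduct_mulVec_eq_sum_eigenvalues] at hpos
    refine hpos.not_ge (Finset.sum_nonpos fun i _ => ?_)
    by_cases hi : 0 < hM.eigenvalues i
    · have : (Uᵀ *ᵥ (x : m → ℝ)) i = 0 := congrFun hx ⟨i, hi⟩
      simp [U, this]
    · exact mul_nonpos_of_nonpos_of_nonneg (not_lt.mp hi) (sq_nonneg _)
  rw [hM.posInertia_eq_card_pos_eigenvalues]
  simpa using LinearMap.finrank_le_finrank_of_injective hf

lemma exists_posDefOn_finrank_eq_posInertia (hM : M.IsHermitian) :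
    ∃ W : Submodule ℝ (m → ℝ), M.PosDefOn W ∧ Module.finrank ℝ W = posInertia M := by
  set U : Matrix m m ℝ := ↑hM.eigenvectorUnitary
  have hUU : Uᵀ * U = 1 := by
    simpa [U, star_eq_conjTranspose] using mem_unitaryGroup_iff'.mp hM.eigenvectorUnitary.2
  -- the span of the eigenvectors with positive eigenvalue
  let g : ({i // 0 < hM.eigenvalues i} → ℝ) →ₗ[ℝ] (m → ℝ) :=
    U.mulVecLin ∘ₗ Function.ExtendByZero.linearMap ℝ Subtype.val
  have hUg : ∀ z, Uᵀ *ᵥ g z = Function.extend Subtype.val z 0 := fun z => by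
    simp [g, mulVec_mulVec, hUU]
    rfl
  have hg : Function.Injective g := fun z z' h => by
    have := congrArg (Uᵀ *ᵥ ·) h
    simp only [hUg] at this
    exact Function.extend_injective Subtype.val_injective (0 : m → ℝ) this
  refine ⟨LinearMap.range g, ?_, ?_⟩
  · rintro _ ⟨z, rfl⟩ hz
    rw [hM.dotProduct_mulVec_eq_sum_eigenvalues, hUg]
    obtain ⟨j, hj⟩ : ∃ j, z j ≠ 0 := by
      by_contra! h
      exact hz (by simp [show z = 0 from funext h])
    refine Finset.sum_pos' (fun i _ => ?_) ⟨j, Finset.mem_univ _, ?_⟩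
    · by_cases hi : 0 < hM.eigenvalues i
      · positivity
      · have hi' : ¬∃ k : {i // 0 < hM.eigenvalues i}, k.1 = i := fun ⟨k, hk⟩ => hi (hk ▸ k.2)
        simp [Function.extend_apply' _ _ _ hi']
    · rw [Subtype.val_injective.extend_apply]
      exact mul_pos j.2 (sq_pos_of_ne_zero hj)
  · rw [LinearMap.finrank_range_of_inj hg, hM.posInertia_eq_card_pos_eigenvalues,
      Module.finrank_fintype_fun_eq_card]

end IsHermitian

lemma IsHermitian.transpose_mul_mul {m n : Type} [Fintype n] {N : Matrix n n ℝ}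
    (hN : N.IsHermitian) (P : Matrix n m ℝ) : (Pᵀ * N * P).IsHermitian := by
  simpa [conjTranspose_eq_transpose_of_trivial] using isHermitian_conjTranspose_mul_mul P hN

lemma dotProduct_transpose_mul_mul_mulVec {m n : Type} [Fintype m] [Fintype n]
    (N : Matrix n n ℝ) (P : Matrix n m ℝ) (x : m → ℝ) :
    x ⬝ᵥ ((Pᵀ * N * P) *ᵥ x) = (P *ᵥ x) ⬝ᵥ (N *ᵥ (P *ᵥ x)) := by
  rw [← mulVec_mulVec, ← mulVec_mulVec, dotProduct_mulVec, vecMul_transpose]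

end Matrix

section Inertia

variable {m n : Type} [Fintype m] [DecidableEq m] [Fintype n] [DecidableEq n]

lemma posInertia_transpose_mul_mul_le {N : Matrix n n ℝ} (hN : N.IsHermitian)
    (P : Matrix n m ℝ) : posInertia (Pᵀ * N * P) ≤ posInertia N := by
  obtain ⟨W, hW, hWdim⟩ := (hN.transpose_mul_mul P).exists_posDefOn_finrank_eq_posInertia
  have hPW : ∀ x ∈ W, x ≠ 0 → 0 < (P *ᵥ x) ⬝ᵥ (N *ᵥ (P *ᵥ x)) := fun x hx hx0 => by
    simpa [dotProduct_transpose_mul_mul_mulVec] using hW x hx hx0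
  let f : W →ₗ[ℝ] (n → ℝ) := P.mulVecLin ∘ₗ W.subtype
  have hf : Function.Injective f := by
    rw [← LinearMap.ker_eq_bot, LinearMap.ker_eq_bot']
    intro x hx
    by_contra hx0
    have hPx : P *ᵥ (x : m → ℝ) = 0 := hx
    simpa [hPx] using hPW x x.2 (by simpa using hx0)
  rw [← hWdim, ← LinearMap.finrank_range_of_inj hf]
  refine hN.finrank_le_posInertia ?_
  rintro _ ⟨x, rfl⟩ hx
  exact hPW x x.2 (by rintro h; simp [f, h] at hx)

lemma posInertia_add_card_le_transpose_mul_mul {N : Matrix n n ℝ} (hN : N.IsHermitian)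
    {P : Matrix n m ℝ} (hP : Function.Injective P.mulVec) :
    posInertia N + Fintype.card m ≤ posInertia (Pᵀ * N * P) + Fintype.card n := by
  obtain ⟨W, hW, hWdim⟩ := hN.exists_posDefOn_finrank_eq_posInertia
  have hPW : (Pᵀ * N * P).PosDefOn (W.comap P.mulVecLin) := fun x hx hx0 => by
    rw [dotProduct_transpose_mul_mul_mulVec]
    exact hW _ hx (fun h => hx0 (hP (h.trans (mulVec_zero P).symm)))
  have hPinj : Function.Injective P.mulVecLin := hP
  have hcomap : Module.finrank ℝ (W.comap P.mulVecLin) =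
      Module.finrank ℝ (LinearMap.range P.mulVecLin ⊓ W : Submodule ℝ (n → ℝ)) := by
    rw [← Submodule.map_comap_eq]
    exact (Submodule.equivMapOfInjective _ hPinj _).finrank_eq
  have hsum := Submodule.finrank_sup_add_finrank_inf_eq (LinearMap.range P.mulVecLin) W
  have hsup := Submodule.finrank_le (LinearMap.range P.mulVecLin ⊔ W)
  rw [LinearMap.finrank_range_of_inj hPinj] at hsum
  have := (hN.transpose_mul_mul P).finrank_le_posInertia hPW
  simp only [Module.finrank_fintype_fun_eq_card] at hsum hsup
  omega

lemma posInertia_add_card_le_submatrix {N : Matrix n n ℝ} (hN : N.IsHermitian) {e : m → n}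
    (he : Function.Injective e) :
    posInertia N + Fintype.card m ≤ posInertia (N.submatrix e e) + Fintype.card n := by
  set P : Matrix n m ℝ := (1 : Matrix n n ℝ).submatrix id e
  have hP : Function.Injective P.mulVec := fun x y h => funext fun j => by
    simpa [P, mulVec, dotProduct, one_apply, he.eq_iff] using congrFun h (e j)
  have hPNP : Pᵀ * N * P = N.submatrix e e := by
    ext i j
    simp [P, mul_apply, one_apply]
  simpa [hPNP] using posInertia_add_card_le_transpose_mul_mul hN hP

lemma posInertia_fromBlocks_zero (M : Matrix m m ℝ) (N : Matrix n n ℝ) :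
    posInertia (fromBlocks M 0 0 N) = posInertia M + posInertia N := by
  rw [posInertia, charpoly_fromBlocks_zero₁₂, Polynomial.roots_mul
    (mul_ne_zero M.charpoly_monic.ne_zero N.charpoly_monic.ne_zero), Multiset.filter_add,
    Multiset.card_add, posInertia, posInertia]

lemma posInertia_one : posInertia (1 : Matrix m m ℝ) = Fintype.card m := by
  rw [posInertia, charpoly_one, ← Polynomial.C_1, Polynomial.roots_pow, Polynomial.roots_X_sub_C,
    Multiset.filter_eq_self.mpr (by simp [Multiset.mem_nsmul])]
  simp

end Inertia

section Border

variable {n : ℕ} {B : Matrix (Fin n) (Fin n) ℝ}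

lemma borderMatrix_eq_fromBlocks (B : Matrix (Fin n) (Fin n) ℝ) (a : Fin n → ℝ) (b : ℝ) :
    borderMatrix B a b = fromBlocks B (replicateCol Unit a) (replicateRow Unit a) (b • 1) := by
  rw [borderMatrix]
  congr
  ext
  simp

lemma isSymm_borderMatrix (hB : B.IsSymm) (a : Fin n → ℝ) (b : ℝ) :
    (borderMatrix B a b).IsSymm := by
  rw [borderMatrix_eq_fromBlocks]
  exact hB.fromBlocks (transpose_replicateCol a) (by simp [IsSymm])

lemma posInertia_borderMatrix_le (hB : B.IsSymm) (a : Fin n → ℝ) (b : ℝ) :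
    posInertia (borderMatrix B a b) ≤ posInertia B + 1 := by
  have := posInertia_add_card_le_submatrix
    (isHermitian_iff_isSymm.mpr (isSymm_borderMatrix hB a b)) Sum.inl_injective
  have hsub : (borderMatrix B a b).submatrix Sum.inl Sum.inl = B := rfl
  simp only [hsub, Fintype.card_sum, Fintype.card_fin, Fintype.card_unit] at this
  omega

lemma exists_transpose_mul_borderMatrix_mul_eq_fromBlocks (hB : B.IsSymm) {a u : Fin n → ℝ}
    (b : ℝ) (hu : B *ᵥ u = 0) (hau : a ⬝ᵥ u ≠ 0) :
    ∃ P, Pᵀ * borderMatrix B a b * P = fromBlocks B 0 0 1 := by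
  set c := a ⬝ᵥ u
  set t := (1 - b) / (2 * c)
  have hc : c ≠ 0 := hau
  have htc : t * c + (t * c + b) = 1 := by
    simp only [t]
    field_simp
    ring
  have hBu : B * replicateCol Unit u = 0 := by
    rw [← replicateCol_mulVec, hu]
    ext
    simp
  have hBu' : ∀ {k : Type} (X : Matrix Unit k ℝ), B * (replicateCol Unit u * X) = 0 :=
    fun X => by rw [← Matrix.mul_assoc, hBu, Matrix.zero_mul]
  have huB : replicateRow Unit u * B = 0 := by
    rw [← transpose_replicateCol, ← hB, ← transpose_mul, hBu, transpose_zero]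
  have hau' : replicateRow Unit a * replicateCol Unit u = c • 1 := by
    ext
    simp [c]
  have hau'' : ∀ {k : Type} (X : Matrix Unit k ℝ),
      replicateRow Unit a * (replicateCol Unit u * X) = c • X :=
    fun X => by rw [← Matrix.mul_assoc, hau', Matrix.smul_mul, Matrix.one_mul]
  have hua : replicateRow Unit u * replicateCol Unit a = c • 1 := by
    ext
    simp [c, dotProduct_comm]
  -- `P = [[I - c⁻¹ u aᵀ, t u], [0, 1]]`: the first block column removes the coupling `aᵀ` with
  -- the help of `B u = 0`, and `t` is chosen so that the corner becomes `2 t c + b = 1`.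
  refine ⟨fromBlocks (1 - c⁻¹ • (replicateCol Unit u * replicateRow Unit a))
    (t • replicateCol Unit u) 0 1, ?_⟩
  rw [borderMatrix_eq_fromBlocks, fromBlocks_transpose, fromBlocks_multiply, fromBlocks_multiply]
  simp only [transpose_sub, transpose_one, transpose_smul, transpose_mul, transpose_zero,
    transpose_replicateCol, transpose_replicateRow, Matrix.mul_sub, Matrix.sub_mul,
    Matrix.mul_smul, Matrix.smul_mul, Matrix.mul_one, Matrix.one_mul, Matrix.mul_zero,
    Matrix.zero_mul, Matrix.mul_assoc, hBu, hBu', huB, hau', hau'', hua,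
    inv_mul_cancel₀ hc, smul_smul, one_smul, smul_zero, sub_self, sub_zero, add_zero, zero_add]
  rw [← add_smul, ← add_smul, htc, one_smul]

lemma posInertia_add_one_le_borderMatrix (hB : B.IsSymm) {a u : Fin n → ℝ} (b : ℝ)
    (hu : B *ᵥ u = 0) (hau : a ⬝ᵥ u ≠ 0) :
    posInertia B + 1 ≤ posInertia (borderMatrix B a b) := by
  obtain ⟨P, hP⟩ := exists_transpose_mul_borderMatrix_mul_eq_fromBlocks hB b hu hau
  calc posInertia B + 1 = posInertia (fromBlocks B 0 0 (1 : Matrix Unit Unit ℝ)) := by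
        rw [posInertia_fromBlocks_zero, posInertia_one, Fintype.card_unit]
    _ = posInertia (Pᵀ * borderMatrix B a b * P) := by rw [hP]
    _ ≤ posInertia (borderMatrix B a b) :=
        posInertia_transpose_mul_mul_le (isHermitian_iff_isSymm.mpr (isSymm_borderMatrix hB a b)) P

end Border

theorem stmt9 (n : ℕ) (B : Matrix (Fin n) (Fin n) ℝ) (a : Fin n → ℝ) (b : ℝ)
    (hB : B.IsSymm) (u : Fin n → ℝ) (hu : B.mulVec u = 0) (hau : a ⬝ᵥ u ≠ 0) :
    posInertia (borderMatrix B a b) = posInertia B + 1 :=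
  le_antisymm (posInertia_borderMatrix_le hB a b) (posInertia_add_one_le_borderMatrix hB b hu hau)
end

section
/- Consider the real quadratic form B(x) = Σ_{i,j=1}^n a_{ij}(x_i − x_j)² with a_{ij} = a_{ji} ∈ ℝ, and let p be its positive index of inertia. Let H be the hypergraph on {1,...,n} whose edges correspond to pairs {i,j} with a_{ij} ≠ 0, let H′ be the subhypergraph corresponding to pairs with a_{ij} > 0, and let T be any spanning hyperforest of H′. Then p ≤ Σ_{e∈E(T)}(|e|−1) ≤ Σ_{e∈E(H′)}(|e|−1) ≤ p + l, where l = l(H) = Σ_{e∈E(H)}(|e|−1) − |V(H)| + c(H) is the cyclomatic number of H and c(H) its number of connected components. -/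
attribute [local instance] Classical.propDecidable

open Finset Matrix

/-! Write `Q x = ∑ a i j (x i - x j)²`. On the functions constant on the edges of `T` — hence,
by maximality of `T`, on the ends of every positive pair — `Q ≤ 0`; this subspace has
codimension at most `|E(T)|`, so `p ≤ |E(T)|`. On the functions constant on the ends of every
negative pair, a subspace of codimension at most `|E(H)| - |E(H')|`, `Q ≥ 0`, and the null
vectors of `Q` there are constant on the components of `H`, so they span at most `c(H)`
dimensions; hence `n - |E(H)| + |E(H')| ≤ p + c(H)`. -/

theorem finrank_le_finrank_add_finrank_of_inf_ker_le {K V W : Type*} [Field K] [AddCommGroup V]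
    [Module K V] [FiniteDimensional K V] [AddCommGroup W] [Module K W] [FiniteDimensional K W]
    (f : V →ₗ[K] W) {U Z : Submodule K V} (h : U ⊓ LinearMap.ker f ≤ Z) :
    Module.finrank K U ≤ Module.finrank K W + Module.finrank K Z := by
  have hsup := Submodule.finrank_sup_add_finrank_inf_eq U (LinearMap.ker f)
  have hrank := LinearMap.finrank_range_add_finrank_ker f
  have := Submodule.finrank_le (U ⊔ LinearMap.ker f)
  have := Submodule.finrank_le (LinearMap.range f)
  have := Submodule.finrank_mono h
  omega

section Inertia

variable {m : Type} [Fintype m] [DecidableEq m] {M : Matrix m m ℝ}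

theorem posInertia_eq_card_pos_eigenvalues (hM : M.IsHermitian) :
    posInertia M = Fintype.card {i // 0 < hM.eigenvalues i} := by
  simp [posInertia, hM.roots_charpoly_eq_eigenvalues, Multiset.filter_map, Fintype.card_subtype,
    Finset.card, Finset.filter_val]

noncomputable def eigenCoords (hM : M.IsHermitian) : (m → ℝ) →ₗ[ℝ] (m → ℝ) :=
  (star (hM.eigenvectorUnitary : Matrix m m ℝ)).mulVecLin

theorem dotProduct_mulVec_eq_sum_eigenCoords (hM : M.IsHermitian) (x : m → ℝ) :
    x ⬝ᵥ M *ᵥ x = ∑ i, hM.eigenvalues i * eigenCoords hM x i ^ 2 := by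
  have hxU : x ᵥ* (hM.eigenvectorUnitary : Matrix m m ℝ) = eigenCoords hM x := by
    rw [eigenCoords, Matrix.mulVecLin_apply, star_eq_conjTranspose,
      conjTranspose_eq_transpose_of_trivial, ← vecMul_transpose, transpose_transpose]
  conv_lhs => rw [hM.spectral_theorem, Unitary.conjStarAlgAut_apply]
  rw [← mulVec_mulVec, ← mulVec_mulVec, dotProduct_mulVec, hxU, dotProduct]
  refine Finset.sum_congr rfl fun i _ => ?_
  simp only [eigenCoords, mulVecBilin_apply, RCLike.ofReal_real_eq_id, CompTriple.comp_eq,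
    mulVec_diagonal]
  ring

theorem eigenCoords_injective (hM : M.IsHermitian) : Function.Injective (eigenCoords hM) := by
  refine (injective_iff_map_eq_zero _).mpr fun x hx => ?_
  rw [← one_mulVec x, ← Unitary.coe_mul_star_self hM.eigenvectorUnitary, ← mulVec_mulVec]
  exact (congrArg _ hx).trans (mulVec_zero _)

noncomputable def eigenCoordsOn (hM : M.IsHermitian) (P : m → Prop) :
    (m → ℝ) →ₗ[ℝ] ({i // P i} → ℝ) :=
  LinearMap.funLeft ℝ ℝ Subtype.val ∘ₗ eigenCoords hM

theorem mem_ker_eigenCoordsOn {hM : M.IsHermitian} {P : m → Prop} {x : m → ℝ} :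
    x ∈ LinearMap.ker (eigenCoordsOn hM P) ↔ ∀ i, P i → eigenCoords hM x i = 0 := by
  simp [eigenCoordsOn, funext_iff, LinearMap.funLeft_apply]

theorem posInertia_add_finrank_le_of_nonpos (hM : M.IsHermitian) (K : Submodule ℝ (m → ℝ))
    (hK : ∀ x ∈ K, x ⬝ᵥ M *ᵥ x ≤ 0) : posInertia M + Module.finrank ℝ K ≤ Fintype.card m := by
  have hdisj : K ⊓ LinearMap.ker (eigenCoordsOn hM fun i => ¬ 0 < hM.eigenvalues i) ≤ ⊥ := by
    intro x hx'
    obtain ⟨hxK, hx⟩ := Submodule.mem_inf.mp hx'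
    rw [mem_ker_eigenCoordsOn] at hx
    have hterm : ∀ i, 0 ≤ hM.eigenvalues i * eigenCoords hM x i ^ 2 := fun i => by
      by_cases hi : 0 < hM.eigenvalues i
      · positivity
      · simp [hx i hi]
    have hsum := le_antisymm (dotProduct_mulVec_eq_sum_eigenCoords hM x ▸ hK x hxK)
      (Finset.sum_nonneg fun i _ => hterm i)
    have hcoord : eigenCoords hM x = 0 := funext fun i => by
      by_cases hi : 0 < hM.eigenvalues i
      · simpa [hi.ne'] using (Finset.sum_eq_zero_iff_of_nonneg fun i _ => hterm i).mp hsum i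
          (Finset.mem_univ i)
      · exact hx i hi
    exact (Submodule.mem_bot ℝ).mpr (eigenCoords_injective hM (hcoord.trans (map_zero _).symm))
  have hrank := finrank_le_finrank_add_finrank_of_inf_ker_le _ hdisj
  rw [finrank_bot, add_zero, Module.finrank_fintype_fun_eq_card,
    Fintype.card_subtype_compl] at hrank
  rw [posInertia_eq_card_pos_eigenvalues hM]
  have := Fintype.card_subtype_le fun i => 0 < hM.eigenvalues i
  omega

theorem finrank_le_posInertia_add_of_nonneg (hM : M.IsHermitian) (U Z : Submodule ℝ (m → ℝ))
    (hU : ∀ x ∈ U, 0 ≤ x ⬝ᵥ M *ᵥ x) (hZ : ∀ x ∈ U, x ⬝ᵥ M *ᵥ x = 0 → x ∈ Z) :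
    Module.finrank ℝ U ≤ posInertia M + Module.finrank ℝ Z := by
  have hle : U ⊓ LinearMap.ker (eigenCoordsOn hM fun i => 0 < hM.eigenvalues i) ≤ Z := by
    intro x hx'
    obtain ⟨hxU, hx⟩ := Submodule.mem_inf.mp hx'
    rw [mem_ker_eigenCoordsOn] at hx
    refine hZ x hxU (le_antisymm ?_ (hU x hxU))
    rw [dotProduct_mulVec_eq_sum_eigenCoords hM]
    refine Finset.sum_nonpos fun i _ => ?_
    by_cases hi : 0 < hM.eigenvalues i
    · simp [hx i hi]
    · exact mul_nonpos_of_nonpos_of_nonneg (not_lt.mp hi) (sq_nonneg _)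
  have hrank := finrank_le_finrank_add_finrank_of_inf_ker_le _ hle
  rwa [Module.finrank_fintype_fun_eq_card, ← posInertia_eq_card_pos_eigenvalues hM] at hrank

end Inertia

theorem Fin.reflTransGen_of_forall_succ {α : Type*} {r : α → α → Prop} {q : ℕ}
    (v : Fin (q + 1) → α) {a b : ℕ} (hab : a ≤ b) (hb : b ≤ q)
    (h : ∀ t : Fin q, a ≤ t → (t : ℕ) < b → r (v t.castSucc) (v t.succ)) :
    Relation.ReflTransGen r (v ⟨a, by omega⟩) (v ⟨b, by omega⟩) := by
  induction b, hab using Nat.le_induction with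
  | base => rfl
  | succ b hab ih =>
    exact (ih (by omega) fun t ht htb => h t ht (by omega)).tail (h ⟨b, by omega⟩ hab (by simp))

theorem Fin.reflTransGen_of_closed_walk {α : Type*} {r : α → α → Prop} {q : ℕ}
    (v : Fin (q + 1) → α) (hclosed : v (Fin.last q) = v 0) (t₀ : Fin q)
    (h : ∀ t : Fin q, t ≠ t₀ → r (v t.castSucc) (v t.succ)) :
    Relation.ReflTransGen r (v t₀.succ) (v t₀.castSucc) := by
  have hafter := Fin.reflTransGen_of_forall_succ v (a := t₀ + 1) (b := q) t₀.2 le_rfl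
    fun t ht _ => h t (Fin.ne_of_val_ne (by omega))
  have hbefore := Fin.reflTransGen_of_forall_succ v (a := 0) (b := t₀) (Nat.zero_le _) t₀.2.le
    fun t _ ht => h t (Fin.ne_of_val_ne (by omega))
  exact hafter.trans (hclosed ▸ hbefore)

theorem exists_pair_eq_pair_iff {V : Type} [DecidableEq V] {P : V → V → Prop}
    (hP : ∀ i j, P i j → P j i) {i j : V} :
    (∃ i' j', i' ≠ j' ∧ P i' j' ∧ ({i, j} : Finset V) = {i', j'}) ↔ i ≠ j ∧ P i j := by
  constructor
  · rintro ⟨i', j', hne, hP', heq⟩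
    have hi : i' ∈ ({i, j} : Finset V) := heq ▸ by simp
    have hj : j' ∈ ({i, j} : Finset V) := heq ▸ by simp
    simp only [mem_insert, mem_singleton] at hi hj
    rcases hi with rfl | rfl <;> rcases hj with rfl | rfl
    all_goals first | exact absurd rfl hne | exact ⟨hne, hP'⟩ | exact ⟨hne.symm, hP _ _ hP'⟩
  · rintro ⟨hij, h⟩
    exact ⟨i, j, hij, h, rfl⟩

theorem sum_card_sub_one_eq_card {V : Type} {s : Finset (Finset V)} (hs : ∀ e ∈ s, e.card = 2) :
    ∑ e ∈ s, ((e.card : ℤ) - 1) = s.card := by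
  rw [sum_congr rfl fun e he => by rw [hs e he], sum_const, nsmul_eq_mul]
  norm_num

theorem apply_eq_of_mem_pair {V : Type} [DecidableEq V] {β : Type*} {x : V → β} {i j u w : V}
    (h : x i = x j) (hu : u ∈ ({i, j} : Finset V)) (hw : w ∈ ({i, j} : Finset V)) :
    x u = x w := by
  simp only [mem_insert, mem_singleton] at hu hw
  rcases hu with rfl | rfl <;> rcases hw with rfl | rfl <;> simp [h]

namespace PlainHypergraph

variable {V : Type}

instance (H : PlainHypergraph V) : Std.Symm H.Adjacent :=
  ⟨fun _ _ ⟨e, he, hx, hy⟩ => ⟨e, he, hy, hx⟩⟩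

theorem IsCycle.apply_castSucc_ne_apply_succ {H : PlainHypergraph V} {q : ℕ}
    {v : Fin (q + 1) → V} {e : Fin q → Finset V} (hc : H.IsCycle v e) (t : Fin q) :
    v t.castSucc ≠ v t.succ := by
  obtain ⟨hq, hinj, -, hclosed, -⟩ := hc
  intro heq
  by_cases ht : (t : ℕ) + 1 < q
  · have := @hinj t ⟨t + 1, ht⟩ heq
    simp [Fin.ext_iff] at this
  · have hlast : t.succ = Fin.last q := Fin.ext (by simp; omega)
    rw [hlast, hclosed] at heq
    have := @hinj t ⟨0, by omega⟩ heq
    simp [Fin.ext_iff] at this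
    omega

/-- Otherwise adding `{i, j}` to `T` would keep it acyclic, against maximality. -/
theorem IsSpanningHyperforest.reflTransGen_adjacent [DecidableEq V] {H T : PlainHypergraph V}
    (hT : H.IsSpanningHyperforest T) {i j : V} (he : {i, j} ∈ H.edges) :
    Relation.ReflTransGen T.Adjacent i j := by
  obtain ⟨hV, hsub, hacyc, hmax⟩ := hT
  by_contra hconn
  let T' : PlainHypergraph V :=
    ⟨T.verts, insert {i, j} T.edges, by
      simp only [mem_insert, forall_eq_or_imp]
      exact ⟨hV ▸ H.edge_subset _ he, T.edge_subset⟩⟩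
  have hT' : T'.Acyclic := by
    rintro ⟨q, v, e, hc⟩
    obtain ⟨-, -, heinj, hclosed, hmem⟩ := id hc
    by_cases hall : ∀ t, e t ∈ T.edges
    · exact hacyc ⟨q, v, e, hc.1, hc.2.1, heinj, hclosed, fun t => ⟨hall t, (hmem t).2⟩⟩
    obtain ⟨t₀, ht₀⟩ := not_forall.mp hall
    have het₀ : e t₀ = {i, j} := (mem_insert.mp (hmem t₀).1).resolve_right ht₀
    have hstep : ∀ t, t ≠ t₀ → T.Adjacent (v t.castSucc) (v t.succ) := fun t ht =>
      ⟨e t, (mem_insert.mp (hmem t).1).resolve_left fun h => ht (heinj (h.trans het₀.symm)),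
        (hmem t).2⟩
    have hpath := Fin.reflTransGen_of_closed_walk v hclosed t₀ hstep
    have hne := hc.apply_castSucc_ne_apply_succ t₀
    have h1 := het₀ ▸ (hmem t₀).2.1
    have h2 := het₀ ▸ (hmem t₀).2.2
    simp only [mem_insert, mem_singleton] at h1 h2
    rcases h1 with h1 | h1 <;> rcases h2 with h2 | h2 <;> rw [h1, h2] at hpath hne
    · exact hne rfl
    · exact hconn (symm hpath)
    · exact hconn hpath
    · exact hne rfl
  have hT'eq := hmax T' hV (insert_subset he hsub) hT' (subset_insert _ _)
  exact hconn (.single ⟨{i, j}, hT'eq ▸ mem_insert_self _ _, by simp, by simp⟩)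


def constOnEdges (s : Finset (Finset V)) : Submodule ℝ (V → ℝ) where
  carrier := {x | ∀ e ∈ s, ∀ u ∈ e, ∀ w ∈ e, x u = x w}
  add_mem' hx hy e he u hu w hw := by simp [hx e he u hu w hw, hy e he u hu w hw]
  zero_mem' _ _ _ _ _ _ := rfl
  smul_mem' c x hx e he u hu w hw := by simp [hx e he u hu w hw]

theorem apply_eq_of_mem_constOnEdges_of_reflTransGen {H : PlainHypergraph V} {x : V → ℝ}
    (hx : x ∈ constOnEdges H.edges) {u w : V} (h : Relation.ReflTransGen H.Adjacent u w) :
    x u = x w := by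
  induction h with
  | refl => rfl
  | tail _ hstep ih =>
    obtain ⟨e, he, hb, hc⟩ := hstep
    exact ih.trans (hx e he _ hb _ hc)

theorem card_le_finrank_constOnEdges_add_card [Fintype V] [DecidableEq V]
    (s : Finset (Finset V)) (hs : ∀ e ∈ s, e.card = 2) :
    Fintype.card V ≤ Module.finrank ℝ (constOnEdges s) + s.card := by
  choose i j _ hij using fun e : s => card_eq_two.mp (hs e e.2)
  let f : (V → ℝ) →ₗ[ℝ] (s → ℝ) := LinearMap.pi fun e =>
    LinearMap.proj (R := ℝ) (φ := fun _ : V => ℝ) (i e) - LinearMap.proj (j e)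
  have hker : ⊤ ⊓ LinearMap.ker f ≤ constOnEdges s := by
    intro x hx e he u hu w hw
    have hxe : x (i ⟨e, he⟩) - x (j ⟨e, he⟩) = 0 := congrFun (Submodule.mem_inf.mp hx).2 ⟨e, he⟩
    rw [show e = _ from hij ⟨e, he⟩] at hu hw
    exact apply_eq_of_mem_pair (sub_eq_zero.mp hxe) hu hw
  have := finrank_le_finrank_add_finrank_of_inf_ker_le f hker
  rwa [finrank_top, Module.finrank_fintype_fun_eq_card, Module.finrank_fintype_fun_eq_card,
    Fintype.card_coe, add_comm] at this

theorem finrank_constOnEdges_le_ncomp [Fintype V] (H : PlainHypergraph V) (hV : H.verts = univ) :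
    Module.finrank ℝ (constOnEdges H.edges) ≤ H.ncomp := by
  set comps := {C : Set V | ∃ v ∈ H.verts, C = {u | Relation.ReflTransGen H.Adjacent v u}}
  have : Fintype comps := (Set.toFinite comps).fintype
  choose rep _ hrep using fun C : comps => C.2
  let f : constOnEdges H.edges →ₗ[ℝ] (comps → ℝ) :=
    LinearMap.funLeft ℝ ℝ rep ∘ₗ (constOnEdges H.edges).subtype
  have hf : Function.Injective f := by
    refine (injective_iff_map_eq_zero f).mpr fun x hx => Subtype.ext (funext fun v => ?_)
    let C : comps := ⟨_, v, hV ▸ mem_univ v, rfl⟩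
    have hv : v ∈ (C : Set V) := Relation.ReflTransGen.refl
    rw [hrep C] at hv
    exact (apply_eq_of_mem_constOnEdges_of_reflTransGen x.2 hv).symm.trans (congrFun hx C)
  calc Module.finrank ℝ (constOnEdges H.edges) ≤ Module.finrank ℝ (comps → ℝ) :=
        LinearMap.finrank_le_finrank_of_injective hf
    _ = H.ncomp := by
      rw [Module.finrank_fintype_fun_eq_card, ← Nat.card_eq_fintype_card, Nat.card_coe_set_eq]
      rfl

end PlainHypergraph

section QuadraticForm

open PlainHypergraph

variable {V : Type} [Fintype V] [DecidableEq V] {a M : Matrix V V ℝ}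

theorem posInertia_le_card_edges_of_isSpanningHyperforest (hM : M.IsHermitian)
    (hquad : ∀ x : V → ℝ, x ⬝ᵥ M *ᵥ x = ∑ i, ∑ j, a i j * (x i - x j) ^ 2)
    {H T : PlainHypergraph V} (hpos : ∀ i j, i ≠ j → 0 < a i j → {i, j} ∈ H.edges)
    (hT : H.IsSpanningHyperforest T) (hTcard : ∀ e ∈ T.edges, e.card = 2) :
    posInertia M ≤ T.edges.card := by
  have hK : ∀ x ∈ constOnEdges T.edges, x ⬝ᵥ M *ᵥ x ≤ 0 := by
    intro x hx
    rw [hquad]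
    refine sum_nonpos fun i _ => sum_nonpos fun j _ => ?_
    by_cases hij : i = j
    · simp [hij]
    by_cases ha : 0 < a i j
    · rw [apply_eq_of_mem_constOnEdges_of_reflTransGen hx
        (hT.reflTransGen_adjacent (hpos i j hij ha))]
      simp
    · exact mul_nonpos_of_nonpos_of_nonneg (not_lt.mp ha) (sq_nonneg _)
  have := posInertia_add_finrank_le_of_nonpos hM _ hK
  have := card_le_finrank_constOnEdges_add_card T.edges hTcard
  omega

theorem card_le_posInertia_add_ncomp_add_card (hM : M.IsHermitian)
    (hquad : ∀ x : V → ℝ, x ⬝ᵥ M *ᵥ x = ∑ i, ∑ j, a i j * (x i - x j) ^ 2)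
    {H : PlainHypergraph V} (hV : H.verts = univ)
    (hH : ∀ e ∈ H.edges, ∃ i j, a i j ≠ 0 ∧ e = {i, j})
    {N : Finset (Finset V)} (hNcard : ∀ e ∈ N, e.card = 2)
    (hneg : ∀ i j, i ≠ j → a i j < 0 → {i, j} ∈ N) :
    Fintype.card V ≤ posInertia M + H.ncomp + N.card := by
  have hN : ∀ x ∈ constOnEdges N, ∀ i j, a i j < 0 → x i = x j := fun x hx i j ha => by
    by_cases hij : i = j
    · rw [hij]
    · exact hx _ (hneg i j hij ha) i (by simp) j (by simp)
  have hterm : ∀ x ∈ constOnEdges N, ∀ i j, 0 ≤ a i j * (x i - x j) ^ 2 := fun x hx i j => by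
    by_cases ha : a i j < 0
    · simp [hN x hx i j ha]
    · exact mul_nonneg (not_lt.mp ha) (sq_nonneg _)
  have hW : ∀ x ∈ constOnEdges N, 0 ≤ x ⬝ᵥ M *ᵥ x := fun x hx => by
    rw [hquad]
    exact sum_nonneg fun i _ => sum_nonneg fun j _ => hterm x hx i j
  have hZ : ∀ x ∈ constOnEdges N, x ⬝ᵥ M *ᵥ x = 0 → x ∈ constOnEdges H.edges := by
    intro x hx hQ e he
    obtain ⟨i, j, ha, rfl⟩ := hH e he
    refine fun u hu w hw => apply_eq_of_mem_pair ?_ hu hw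
    rcases ha.lt_or_gt with ha | ha
    · exact hN x hx i j ha
    · rw [hquad, sum_eq_zero_iff_of_nonneg fun i _ => sum_nonneg fun j _ => hterm x hx i j] at hQ
      have := (sum_eq_zero_iff_of_nonneg fun j _ => hterm x hx i j).mp (hQ i (mem_univ i)) j
        (mem_univ j)
      simpa [ha.ne', sub_eq_zero] using this
  have := finrank_le_posInertia_add_of_nonneg hM _ _ hW hZ
  have := card_le_finrank_constOnEdges_add_card N hNcard
  have := finrank_constOnEdges_le_ncomp H hV
  omega

end QuadraticForm

theorem stmt12_general (n : ℕ) (a : Matrix (Fin n) (Fin n) ℝ) (hsym : ∀ i j, a i j = a j i)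
    (M : Matrix (Fin n) (Fin n) ℝ) (hM : M.IsSymm)
    (hquad : ∀ x : Fin n → ℝ,
      x ⬝ᵥ M.mulVec x = ∑ i : Fin n, ∑ j : Fin n, a i j * (x i - x j) ^ 2)
    (H H' T : PlainHypergraph (Fin n))
    (hHv : H.verts = Finset.univ)
    (hHe : H.edges = Finset.univ.filter fun e : Finset (Fin n) =>
      ∃ i j : Fin n, i ≠ j ∧ a i j ≠ 0 ∧ e = {i, j})
    (hH'e : H'.edges = Finset.univ.filter fun e : Finset (Fin n) =>
      ∃ i j : Fin n, i ≠ j ∧ 0 < a i j ∧ e = {i, j})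
    (hT : H'.IsSpanningHyperforest T) :
    (posInertia M : ℤ) ≤ ∑ e ∈ T.edges, ((e.card : ℤ) - 1) ∧
      ∑ e ∈ T.edges, ((e.card : ℤ) - 1) ≤ ∑ e ∈ H'.edges, ((e.card : ℤ) - 1) ∧
        ∑ e ∈ H'.edges, ((e.card : ℤ) - 1) ≤ (posInertia M : ℤ) + H.cyclomatic := by
  have hMh : M.IsHermitian := by rwa [IsHermitian, conjTranspose_eq_transpose_of_trivial]
  have hmemH' (i j : Fin n) : {i, j} ∈ H'.edges ↔ i ≠ j ∧ 0 < a i j := by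
    simpa [hH'e] using exists_pair_eq_pair_iff fun i j (h : 0 < a i j) => hsym i j ▸ h
  have hmemH (i j : Fin n) : {i, j} ∈ H.edges ↔ i ≠ j ∧ a i j ≠ 0 := by
    simpa [hHe] using exists_pair_eq_pair_iff fun i j (h : a i j ≠ 0) => hsym i j ▸ h
  have hH (e) (he : e ∈ H.edges) : ∃ i j, i ≠ j ∧ a i j ≠ 0 ∧ e = {i, j} := by
    simpa [hHe] using he
  have hcardH (e) (he : e ∈ H.edges) : e.card = 2 := by
    obtain ⟨i, j, hij, -, rfl⟩ := hH e he
    exact card_pair hij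
  have hH'H : H'.edges ⊆ H.edges := fun e he => by
    obtain ⟨i, j, hij, ha, rfl⟩ : ∃ i j, i ≠ j ∧ 0 < a i j ∧ e = {i, j} := by simpa [hH'e] using he
    exact (hmemH i j).2 ⟨hij, ha.ne'⟩
  have hTH : T.edges ⊆ H.edges := hT.2.1.trans hH'H
  rw [sum_card_sub_one_eq_card fun e he => hcardH e (hTH he),
    sum_card_sub_one_eq_card fun e he => hcardH e (hH'H he)]
  refine ⟨?_, by exact_mod_cast card_le_card hT.2.1, ?_⟩
  · exact_mod_cast posInertia_le_card_edges_of_isSpanningHyperforest hMh hquad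
      (fun i j hij ha => (hmemH' i j).2 ⟨hij, ha⟩) hT fun e he => hcardH e (hTH he)
  · have := card_le_posInertia_add_ncomp_add_card hMh hquad hHv
      (fun e he => by obtain ⟨i, j, -, ha, rfl⟩ := hH e he; exact ⟨i, j, ha, rfl⟩)
      (N := H.edges \ H'.edges) (fun e he => hcardH e (mem_sdiff.mp he).1)
      fun i j hij ha => mem_sdiff.mpr
        ⟨(hmemH i j).2 ⟨hij, ha.ne⟩, fun h => lt_asymm ha ((hmemH' i j).1 h).2⟩
    rw [card_sdiff_of_subset hH'H, Fintype.card_fin] at this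
    have := card_le_card hH'H
    rw [PlainHypergraph.cyclomatic, sum_card_sub_one_eq_card hcardH, hHv, card_univ,
      Fintype.card_fin]
    omega

theorem stmt12 (n : ℕ) (a : Matrix (Fin n) (Fin n) ℝ) (hsym : ∀ i j, a i j = a j i)
    (M : Matrix (Fin n) (Fin n) ℝ) (hM : M.IsSymm)
    (hquad : ∀ x : Fin n → ℝ,
      x ⬝ᵥ M.mulVec x = ∑ i : Fin n, ∑ j : Fin n, a i j * (x i - x j) ^ 2)
    (H H' T : PlainHypergraph (Fin n))
    (hHv : H.verts = Finset.univ) (hH'v : H'.verts = Finset.univ)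
    (hHe : H.edges = Finset.univ.filter fun e : Finset (Fin n) =>
      ∃ i j : Fin n, i ≠ j ∧ a i j ≠ 0 ∧ e = {i, j})
    (hH'e : H'.edges = Finset.univ.filter fun e : Finset (Fin n) =>
      ∃ i j : Fin n, i ≠ j ∧ 0 < a i j ∧ e = {i, j})
    (hT : H'.IsSpanningHyperforest T) :
    (posInertia M : ℤ) ≤ ∑ e ∈ T.edges, ((e.card : ℤ) - 1) ∧
      ∑ e ∈ T.edges, ((e.card : ℤ) - 1) ≤ ∑ e ∈ H'.edges, ((e.card : ℤ) - 1) ∧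
        ∑ e ∈ H'.edges, ((e.card : ℤ) - 1) ≤ (posInertia M : ℤ) + H.cyclomatic :=
  stmt12_general n a hsym M hM hquad H H' T hHv hHe hH'e hT
end
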